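/- arXiv:1401.3928 — 8 statements merged into one kernel-verified Lean document; each statement's English description precedes it below -/
import Mathlib

section
/- If there exists a binary constant-weight code of length n, weight w, and minimum Hamming distance d1 with at least q codewords, and there exists a q-ary code of length m and minimum Hamming distance d2 with M codewords, then there exists a multiply constant-weight code MCWC(m,n,d1*d2,w) (a binary code of length mn, whose codewords have weight exactly w in each of the m consecutive blocks of length n, with minimum distance d1*d2) with M codewords. In particular M(m,n,d1*d2,w) >= A_q(m,d2) whenever q <= A(n,d1,w). -/
open Finset

/-- Hamming weight of a binary word. -/
def wt {n : ℕ} (x : Fin n → Bool) : ℕ := (Finset.univ.filter fun i => x i = true).card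

/-- `A n d w`: max size of a binary constant-weight code of length `n`, distance `d`, weight `w`. -/
noncomputable def A (n d w : ℕ) : ℕ :=
  sSup {s | ∃ C : Finset (Fin n → Bool), C.card = s ∧
    (∀ x ∈ C, wt x = w) ∧ ∀ x ∈ C, ∀ y ∈ C, x ≠ y → d ≤ hammingDist x y}

/-- `Aq q m d`: max size of a `q`-ary code of length `m` with minimum distance `d`. -/
noncomputable def Aq (q m d : ℕ) : ℕ :=
  sSup {s | ∃ C : Finset (Fin m → Fin q), C.card = s ∧
    ∀ x ∈ C, ∀ y ∈ C, x ≠ y → d ≤ hammingDist x y}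

/-- `M m n d w`: max size of a multiply constant-weight code: `m × n` binary matrices with
constant row weight `w` and pairwise (flattened) Hamming distance at least `d`. -/
noncomputable def M (m n d w : ℕ) : ℕ :=
  sSup {s | ∃ C : Finset (Fin m → Fin n → Bool), C.card = s ∧
    (∀ x ∈ C, ∀ i, wt (x i) = w) ∧
    ∀ x ∈ C, ∀ y ∈ C, x ≠ y → d ≤ ∑ i, hammingDist (x i) (y i)}

/-!
Concatenation: fix `q` codewords of an optimal constant-weight code `D` and substitute them for
the symbols of an optimal `q`-ary code. Every block of the result is a codeword of `D`, so has
weight `w`, and two words that differ in at least `d₂` symbols differ in at least `d₁` positions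
within each of those blocks.
-/

section OptimalCodes

variable {α : Type*} [Fintype α]

lemma bddAbove_setOf_card (P : Finset α → Prop) :
    BddAbove {s | ∃ C : Finset α, C.card = s ∧ P C} :=
  ⟨Fintype.card α, by rintro s ⟨C, rfl, -⟩; exact C.card_le_univ⟩

lemma exists_card_eq_sSup_setOf_card {P : Finset α → Prop} (hP : P ∅) :
    ∃ C : Finset α, C.card = sSup {s | ∃ C : Finset α, C.card = s ∧ P C} ∧ P C :=
  Nat.sSup_mem ⟨0, by exact ⟨∅, card_empty, hP⟩⟩ (bddAbove_setOf_card P)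

lemma card_le_sSup_setOf_card {P : Finset α → Prop} {C : Finset α} (hC : P C) :
    C.card ≤ sSup {s | ∃ C : Finset α, C.card = s ∧ P C} :=
  le_csSup (bddAbove_setOf_card P) ⟨C, rfl, hC⟩

end OptimalCodes

lemma mul_hammingDist_le_sum_hammingDist_comp {ι β κ γ : Type*} [Fintype ι] [DecidableEq β]
    [Fintype κ] [DecidableEq γ] {d : ℕ} {φ : β → κ → γ}
    (hφ : ∀ a b, a ≠ b → d ≤ hammingDist (φ a) (φ b)) (x y : ι → β) :
    d * hammingDist x y ≤ ∑ i, hammingDist (φ (x i)) (φ (y i)) :=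
  calc d * hammingDist x y = ∑ _i ∈ univ.filter (fun i => x i ≠ y i), d := by
        rw [sum_const, smul_eq_mul, mul_comm, hammingDist]
    _ ≤ ∑ i ∈ univ.filter (fun i => x i ≠ y i), hammingDist (φ (x i)) (φ (y i)) :=
        sum_le_sum fun i hi => hφ _ _ (mem_filter.1 hi).2
    _ ≤ ∑ i, hammingDist (φ (x i)) (φ (y i)) := sum_le_sum_of_subset (filter_subset _ _)

/-- Concatenation bound: if `q ≤ A(n,d₁,w)` then `M(m,n,d₁d₂,w) ≥ A_q(m,d₂)`. -/
theorem stmt0 (m n d1 d2 w q : ℕ) (hq : q ≤ A n d1 w) :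
    Aq q m d2 ≤ M m n (d1 * d2) w := by
  classical
  obtain ⟨D, hD, hDwt, hDdist⟩ := exists_card_eq_sSup_setOf_card (α := Fin n → Bool)
    (P := fun D => (∀ x ∈ D, wt x = w) ∧ ∀ x ∈ D, ∀ y ∈ D, x ≠ y → d1 ≤ hammingDist x y)
    (by simp)
  obtain ⟨C, hC, hCdist⟩ := exists_card_eq_sSup_setOf_card (α := Fin m → Fin q)
    (P := fun C => ∀ x ∈ C, ∀ y ∈ C, x ≠ y → d2 ≤ hammingDist x y) (by simp)
  let φ : Fin q ↪ (Fin n → Bool) := (Fin.castLEEmb (hq.trans_eq hD.symm)).trans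
    (D.equivFin.symm.toEmbedding.trans (Function.Embedding.subtype _))
  have hφD (a : Fin q) : φ a ∈ D := (D.equivFin.symm _).2
  have hφdist (a b : Fin q) (hab : a ≠ b) : d1 ≤ hammingDist (φ a) (φ b) :=
    hDdist _ (hφD a) _ (hφD b) (φ.injective.ne hab)
  rw [Aq, ← hC, ← card_map (Function.Embedding.arrowCongrRight φ)]
  refine card_le_sSup_setOf_card ⟨?_, ?_⟩
  · simp only [mem_map]
    rintro _ ⟨x, -, rfl⟩ i
    exact hDwt _ (hφD (x i))
  · simp only [mem_map]
    rintro _ ⟨x, hx, rfl⟩ _ ⟨y, hy, rfl⟩ hxy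
    calc d1 * d2 ≤ d1 * hammingDist x y :=
          Nat.mul_le_mul_left d1 (hCdist x hx y hy (ne_of_apply_ne _ hxy))
      _ ≤ _ := mul_hammingDist_le_sum_hammingDist_comp hφdist x y
end

section
/- If C is a binary code of length n, minimum distance d, and size 2^k that is systematic (there is a k-subset I of coordinates such that the restriction of C to I is all of F_2^k), then the code D = {(x, complement of x) : x in C} of length 2n is a systematic constant-weight code of weight n and minimum distance 2d with 2^k codewords. Hence S(2n,2d,n) >= S(n,d). -/
open Finset

/-- A code of size `2^k` is systematic w.r.t. some `k`-set of coordinates on which it projects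
bijectively onto all binary `k`-tuples. -/
def Systematic {n : ℕ} (C : Finset (Fin n → Bool)) (k : ℕ) : Prop :=
  ∃ I : Finset (Fin n), I.card = k ∧
    ∀ f : Fin n → Bool, ∃! x, x ∈ C ∧ ∀ i ∈ I, x i = f i

/-- `Ssys n d`: the largest size of a systematic binary `(n,d)` code. -/
noncomputable def Ssys (n d : ℕ) : ℕ :=
  sSup {s | ∃ k, s = 2 ^ k ∧ ∃ C : Finset (Fin n → Bool), C.card = 2 ^ k ∧
    Systematic C k ∧ ∀ x ∈ C, ∀ y ∈ C, x ≠ y → d ≤ hammingDist x y}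

/-- `Ssyscw n d w`: the largest size of a systematic binary constant-weight `(n,d,w)` code. -/
noncomputable def Ssyscw (n d w : ℕ) : ℕ :=
  sSup {s | ∃ k, s = 2 ^ k ∧ ∃ C : Finset (Fin n → Bool), C.card = 2 ^ k ∧
    Systematic C k ∧ (∀ x ∈ C, wt x = w) ∧
    ∀ x ∈ C, ∀ y ∈ C, x ≠ y → d ≤ hammingDist x y}

/-- `D = {(x, x̄) : x ∈ C}`. -/
def doubleCode {n : ℕ} (C : Finset (Fin n → Bool)) : Finset (Fin (n + n) → Bool) :=
  C.image fun x => Fin.append x (fun i => ! x i)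

/-! The map `x ↦ (x, x̄)` is injective, gives every word weight `n`, and doubles Hamming
distances, since flipping every bit preserves them. Its first half is `x` itself, so an
information set of `C` is one of the doubled code as well. -/

theorem hammingDist_append {α : Type*} [DecidableEq α] {m n : ℕ} (x₁ y₁ : Fin m → α)
    (x₂ y₂ : Fin n → α) :
    hammingDist (Fin.append x₁ x₂) (Fin.append y₁ y₂) = hammingDist x₁ y₁ + hammingDist x₂ y₂ := by
  simp only [hammingDist, card_filter, Fin.sum_univ_add, Fin.append_left, Fin.append_right]

theorem wt_append {m n : ℕ} (x : Fin m → Bool) (y : Fin n → Bool) :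
    wt (Fin.append x y) = wt x + wt y := by
  simp only [wt, card_filter, Fin.sum_univ_add, Fin.append_left, Fin.append_right]

theorem wt_add_wt_not {n : ℕ} (x : Fin n → Bool) : wt x + wt (fun i => !x i) = n := by
  simpa [wt] using card_filter_add_card_filter_not (s := univ) (fun i => x i = true)

def doubleWord {n : ℕ} (x : Fin n → Bool) : Fin (n + n) → Bool :=
  Fin.append x fun i => !x i

theorem doubleCode_eq_image {n : ℕ} (C : Finset (Fin n → Bool)) :
    doubleCode C = C.image doubleWord := rfl

theorem doubleWord_castAdd {n : ℕ} (x : Fin n → Bool) (i : Fin n) :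
    doubleWord x (Fin.castAdd n i) = x i :=
  Fin.append_left _ _ i

theorem doubleWord_injective {n : ℕ} : Function.Injective (doubleWord (n := n)) :=
  fun x y h => funext fun i => by
    simpa only [doubleWord_castAdd] using congrFun h (Fin.castAdd n i)

theorem wt_doubleWord {n : ℕ} (x : Fin n → Bool) : wt (doubleWord x) = n := by
  rw [doubleWord, wt_append, wt_add_wt_not]

theorem hammingDist_doubleWord {n : ℕ} (x y : Fin n → Bool) :
    hammingDist (doubleWord x) (doubleWord y) = 2 * hammingDist x y := by
  rw [doubleWord, doubleWord, hammingDist_append,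
    hammingDist_comp (fun _ => not) (fun _ => Bool.not_injective), two_mul]

theorem Systematic.image {m n k : ℕ} {C : Finset (Fin m → Bool)} (hC : Systematic C k)
    (φ : (Fin m → Bool) → Fin n → Bool) (e : Fin m ↪ Fin n) (hφ : ∀ x i, φ x (e i) = x i) :
    Systematic (C.image φ) k := by
  obtain ⟨I, hIcard, hI⟩ := hC
  refine ⟨I.map e, by rw [card_map, hIcard], fun f => ?_⟩
  obtain ⟨x, ⟨hxC, hxI⟩, hx_unique⟩ := hI (f ∘ e)
  refine ⟨φ x, ⟨mem_image_of_mem φ hxC, ?_⟩, ?_⟩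
  · simpa only [forall_mem_map, hφ, Function.comp_apply] using hxI
  · rintro _ ⟨hy, hyI⟩
    obtain ⟨y, hyC, rfl⟩ := mem_image.1 hy
    rw [hx_unique y ⟨hyC, by simpa only [forall_mem_map, hφ, Function.comp_apply] using hyI⟩]

theorem Systematic.doubleCode {n k : ℕ} {C : Finset (Fin n → Bool)} (hC : Systematic C k) :
    Systematic (doubleCode C) k :=
  hC.image doubleWord (Fin.castAddEmb n) doubleWord_castAdd

theorem card_doubleCode {n : ℕ} (C : Finset (Fin n → Bool)) :
    (doubleCode C).card = C.card :=
  card_image_of_injective C doubleWord_injective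

theorem wt_of_mem_doubleCode {n : ℕ} {C : Finset (Fin n → Bool)} :
    ∀ y ∈ doubleCode C, wt y = n := by
  simp only [doubleCode_eq_image, forall_mem_image]
  exact fun x _ => wt_doubleWord x

theorem le_hammingDist_of_mem_doubleCode {n d : ℕ} {C : Finset (Fin n → Bool)}
    (hd : ∀ x ∈ C, ∀ y ∈ C, x ≠ y → d ≤ hammingDist x y) :
    ∀ y ∈ doubleCode C, ∀ z ∈ doubleCode C, y ≠ z → 2 * d ≤ hammingDist y z := by
  simp only [doubleCode_eq_image, forall_mem_image]
  intro x hx x' hx' hne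
  rw [hammingDist_doubleWord]
  exact Nat.mul_le_mul_left 2 (hd x hx x' hx' (ne_of_apply_ne doubleWord hne))

theorem Ssys_le_Ssyscw (n d : ℕ) : Ssys n d ≤ Ssyscw (n + n) (2 * d) n := by
  refine csSup_le_csSup' ⟨2 ^ (n + n), ?_⟩ ?_
  · rintro _ ⟨k, rfl, C, hC, -⟩
    simpa [← hC] using card_le_univ C
  · rintro _ ⟨k, rfl, C, hC, hsys, hd⟩
    exact ⟨k, rfl, doubleCode C, (card_doubleCode C).trans hC, hsys.doubleCode,
      wt_of_mem_doubleCode, le_hammingDist_of_mem_doubleCode hd⟩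

/-- Böinck–van Tilborg: from a systematic `(n,d)` code of size `2^k`, the code
`{(x,x̄)}` is a systematic constant-weight code of length `2n`, weight `n`,
distance `2d`, size `2^k`; hence `S(2n,2d,n) ≥ S(n,d)`. -/
theorem stmt2 (n d k : ℕ) (C : Finset (Fin n → Bool)) (hcard : C.card = 2 ^ k)
    (hsys : Systematic C k)
    (hd : ∀ x ∈ C, ∀ y ∈ C, x ≠ y → d ≤ hammingDist x y) :
    ((doubleCode C).card = 2 ^ k ∧
     (∀ y ∈ doubleCode C, wt y = n) ∧
     Systematic (doubleCode C) k ∧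
     (∀ y ∈ doubleCode C, ∀ z ∈ doubleCode C, y ≠ z → 2 * d ≤ hammingDist y z)) ∧
    Ssys n d ≤ Ssyscw (n + n) (2 * d) n :=
  ⟨⟨(card_doubleCode C).trans hcard, wt_of_mem_doubleCode, hsys.doubleCode,
    le_hammingDist_of_mem_doubleCode hd⟩, Ssys_le_Ssyscw n d⟩
end

section
/- The pseudo-product construction: given a systematic binary constant-weight code C of length n, weight w, distance d1, size 2^{k1}, and a systematic binary code D of length m, distance d2, size 2^{k2}, there exists an MCWC(m,n,d1*d2,w) of size 2^{k1*k2}. Hence M(m,n,d1*d2,w) >= 2^{s(n,d1,w)*s(m,d2)}. -/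
/-! A message is a matrix indexed by `J × I`, where `J` and `I` are information sets of `D` and
`C`. Encode its columns by `D` and then the rows of the resulting `m × I` matrix by `C`. Every row
is a codeword of `C`, so the row weights are `w`, and the message reappears in the `J × I` block,
so the encoding is injective. If two messages differ at `(r₀, c₀)`, their `D`-codewords in
column `c₀` differ in at least `d₂` rows, and each of these rows is a pair of distinct codewords
of `C`, hence contributes at least `d₁` to the distance. -/

open Finset

structure IsSystematicEncoder {ι α : Type*} (C : Finset (ι → α)) (I : Finset ι)
    (enc : (I → α) → ι → α) : Prop where
  mem : ∀ u, enc u ∈ C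
  apply_coe : ∀ u (i : I), enc u i = u i

theorem Systematic.exists_isSystematicEncoder {n k : ℕ} {C : Finset (Fin n → Bool)}
    (hC : Systematic C k) :
    ∃ I : Finset (Fin n), I.card = k ∧ ∃ enc, IsSystematicEncoder C I enc := by
  classical
  obtain ⟨I, hIcard, hI⟩ := hC
  have hext (u : I → Bool) :=
    (hI fun i => if hi : i ∈ I then u ⟨i, hi⟩ else false).exists
  choose enc henc using hext
  exact ⟨I, hIcard, enc, fun u => (henc u).1, fun u i => by simpa using (henc u).2 i i.2⟩

theorem mul_hammingDist_col_le_sum_hammingDist {κ ι α : Type*} [Fintype κ] [Fintype ι]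
    [DecidableEq α] {x y : κ → ι → α} {c : ι} {d : ℕ}
    (h : ∀ r, x r c ≠ y r c → d ≤ hammingDist (x r) (y r)) :
    d * hammingDist (fun r => x r c) (fun r => y r c) ≤ ∑ r, hammingDist (x r) (y r) := by
  set T : Finset κ := {r | x r c ≠ y r c}
  calc d * hammingDist (fun r => x r c) (fun r => y r c) = T.card • d := mul_comm _ _
    _ ≤ ∑ r ∈ T, hammingDist (x r) (y r) :=
        card_nsmul_le_sum _ _ _ fun r hr => h r (mem_filter.1 hr).2
    _ ≤ ∑ r, hammingDist (x r) (y r) := sum_le_sum_of_subset (subset_univ T)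

section PseudoProduct

variable {ι κ α : Type*} {I : Finset ι} {J : Finset κ}

def pseudoProduct (encC : (I → α) → ι → α) (encD : (J → α) → κ → α) (g : J → I → α) :
    κ → ι → α :=
  fun r => encC fun c => encD (fun r' => g r' c) r

variable {C : Finset (ι → α)} {D : Finset (κ → α)}
  {encC : (I → α) → ι → α} {encD : (J → α) → κ → α}

theorem pseudoProduct_mem (hC : IsSystematicEncoder C I encC) (g : J → I → α) (r : κ) :
    pseudoProduct encC encD g r ∈ C :=
  hC.mem _

theorem pseudoProduct_apply_coe (hC : IsSystematicEncoder C I encC) (g : J → I → α) (r : κ)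
    (c : I) : pseudoProduct encC encD g r c = encD (fun r' => g r' c) r :=
  hC.apply_coe _ c

theorem pseudoProduct_apply_coe_coe (hC : IsSystematicEncoder C I encC)
    (hD : IsSystematicEncoder D J encD) (g : J → I → α) (r : J) (c : I) :
    pseudoProduct encC encD g r c = g r c := by
  rw [pseudoProduct_apply_coe hC, hD.apply_coe]

theorem pseudoProduct_injective (hC : IsSystematicEncoder C I encC)
    (hD : IsSystematicEncoder D J encD) : Function.Injective (pseudoProduct encC encD) :=
  fun g g' h => funext₂ fun r c => by
    rw [← pseudoProduct_apply_coe_coe hC hD g, ← pseudoProduct_apply_coe_coe hC hD g', h]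

theorem mul_le_sum_hammingDist_pseudoProduct [Fintype ι] [Fintype κ] [DecidableEq α]
    {d1 d2 : ℕ} (hC : IsSystematicEncoder C I encC) (hD : IsSystematicEncoder D J encD)
    (hCd : ∀ x ∈ C, ∀ y ∈ C, x ≠ y → d1 ≤ hammingDist x y)
    (hDd : ∀ x ∈ D, ∀ y ∈ D, x ≠ y → d2 ≤ hammingDist x y)
    {g g' : J → I → α} (hgg' : g ≠ g') :
    d1 * d2 ≤ ∑ r, hammingDist (pseudoProduct encC encD g r) (pseudoProduct encC encD g' r) := by
  obtain ⟨r₀, c₀, hne⟩ : ∃ r₀ c₀, g r₀ c₀ ≠ g' r₀ c₀ := by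
    by_contra! h
    exact hgg' (funext₂ h)
  have hcol : d2 ≤ hammingDist (encD fun r => g r c₀) (encD fun r => g' r c₀) :=
    hDd _ (hD.mem _) _ (hD.mem _) fun h => hne <| by
      rw [← hD.apply_coe (fun r => g r c₀), h, hD.apply_coe]
  calc d1 * d2
      ≤ d1 * hammingDist (fun r => pseudoProduct encC encD g r c₀)
          (fun r => pseudoProduct encC encD g' r c₀) := by
        simpa only [pseudoProduct_apply_coe hC] using Nat.mul_le_mul_left d1 hcol
    _ ≤ _ := mul_hammingDist_col_le_sum_hammingDist fun r hr =>
        hCd _ (pseudoProduct_mem hC g r) _ (pseudoProduct_mem hC g' r) fun h => hr (congrFun h c₀)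

end PseudoProduct

theorem card_le_M {m n d w : ℕ} (E : Finset (Fin m → Fin n → Bool))
    (hwt : ∀ x ∈ E, ∀ i, wt (x i) = w)
    (hd : ∀ x ∈ E, ∀ y ∈ E, x ≠ y → d ≤ ∑ i, hammingDist (x i) (y i)) :
    E.card ≤ M m n d w :=
  le_csSup ⟨Fintype.card (Fin m → Fin n → Bool), fun _ ⟨F, hF, _⟩ => hF ▸ card_le_univ F⟩
    ⟨E, rfl, hwt, hd⟩

theorem stmt4_general (m n d1 d2 w k1 k2 : ℕ)
    (C : Finset (Fin n → Bool)) (hCsys : Systematic C k1)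
    (hCwt : ∀ x ∈ C, wt x = w)
    (hCd : ∀ x ∈ C, ∀ y ∈ C, x ≠ y → d1 ≤ hammingDist x y)
    (D : Finset (Fin m → Bool)) (hDsys : Systematic D k2)
    (hDd : ∀ x ∈ D, ∀ y ∈ D, x ≠ y → d2 ≤ hammingDist x y) :
    2 ^ (k1 * k2) ≤ M m n (d1 * d2) w := by
  obtain ⟨I, hIcard, encC, hC⟩ := hCsys.exists_isSystematicEncoder
  obtain ⟨J, hJcard, encD, hD⟩ := hDsys.exists_isSystematicEncoder
  have hinj := pseudoProduct_injective hC hD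
  have hcard : (univ.image (pseudoProduct encC encD)).card = 2 ^ (k1 * k2) := by
    rw [card_image_of_injective _ hinj, card_univ, Fintype.card_fun, Fintype.card_fun]
    simp only [Fintype.card_coe, Fintype.card_bool, hIcard, hJcard, ← pow_mul]
  refine hcard ▸ card_le_M _ ?_ ?_
  · simp only [mem_image, mem_univ, true_and, forall_exists_index, forall_apply_eq_imp_iff]
    exact fun g r => hCwt _ (pseudoProduct_mem hC g r)
  · simp only [mem_image, mem_univ, true_and, forall_exists_index, forall_apply_eq_imp_iff]
    exact fun g g' hne => mul_le_sum_hammingDist_pseudoProduct hC hD hCd hDd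
      fun h => hne (congrArg _ h)

/-- Pseudo-product construction: from a systematic CWC`(n,d₁,w)` of size `2^{k₁}` and a
systematic `(m,d₂)` code of size `2^{k₂}` one obtains an MCWC`(m,n,d₁d₂,w)` of size
`2^{k₁k₂}`; hence `M(m,n,d₁d₂,w) ≥ 2^{k₁k₂}`. -/
theorem stmt4 (m n d1 d2 w k1 k2 : ℕ)
    (C : Finset (Fin n → Bool)) (hCcard : C.card = 2 ^ k1) (hCsys : Systematic C k1)
    (hCwt : ∀ x ∈ C, wt x = w)
    (hCd : ∀ x ∈ C, ∀ y ∈ C, x ≠ y → d1 ≤ hammingDist x y)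
    (D : Finset (Fin m → Bool)) (hDcard : D.card = 2 ^ k2) (hDsys : Systematic D k2)
    (hDd : ∀ x ∈ D, ∀ y ∈ D, x ≠ y → d2 ≤ hammingDist x y) :
    2 ^ (k1 * k2) ≤ M m n (d1 * d2) w :=
  stmt4_general m n d1 d2 w k1 k2 C hCsys hCwt hCd D hDsys hDd
end

section
/- Johnson-type bound for doubly/multiply constant-weight codes: T(w_1,n_1; ...; w_m,n_m; d) <= floor( (n_i / w_i) * T(w_1,n_1; ...; w_i - 1, n_i - 1; ...; w_m,n_m; d) ) for each index i with w_i >= 1. -/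
/-!
Double counting the pairs (codeword, position of block `i` carrying a 1) gives
`|C| wᵢ = ∑ⱼ |Cⱼ|`, where `Cⱼ` is the set of codewords with a 1 at position `j` of block `i`.
Deleting position `j` from the words of `Cⱼ` is injective and keeps all distances, since they
agree there, while the weight of block `i` drops by one; so `|Cⱼ|` is at most the shortened `T`,
and summing over the `nᵢ` positions gives the bound.
-/

open Finset

/-- `T m n w d`: max size of a binary code with `m` blocks, the `i`-th of length `n i`, in which
every codeword has weight exactly `w i` on block `i`, with minimum (total) Hamming distance `d`. -/
noncomputable def T (m : ℕ) (n w : Fin m → ℕ) (d : ℕ) : ℕ :=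
  sSup {s | ∃ C : Finset ((i : Fin m) → Fin (n i) → Bool), C.card = s ∧
    (∀ x ∈ C, ∀ i, wt (x i) = w i) ∧
    ∀ x ∈ C, ∀ y ∈ C, x ≠ y → d ≤ ∑ i, hammingDist (x i) (y i)}

open Function

section Hamming

variable {α β : Type*} [Fintype α] (e : α ↪ β) (x y : β → Bool)

theorem hammingDist_comp_embedding :
    hammingDist (x ∘ e) (y ∘ e) = #{b ∈ univ.map e | x b ≠ y b} := by
  rw [hammingDist, filter_map, card_map]
  rfl

variable {e} [Fintype β]

theorem hammingDist_comp_embedding_of_range_eq_univ (he : Set.range e = Set.univ) :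
    hammingDist (x ∘ e) (y ∘ e) = hammingDist x y := by
  rw [hammingDist_comp_embedding, map_univ_of_surjective (Set.range_eq_univ.mp he)]
  rfl

theorem map_univ_eq_erase_of_range_eq_compl [DecidableEq β] {j : β} (he : Set.range e = {j}ᶜ) :
    univ.map e = univ.erase j :=
  coe_injective (by simp [he, Set.compl_eq_univ_sdiff])

theorem hammingDist_comp_embedding_of_range_eq_compl_of_eq [DecidableEq β] {j : β}
    (he : Set.range e = {j}ᶜ) (hj : x j = y j) : hammingDist (x ∘ e) (y ∘ e) = hammingDist x y := by
  rw [hammingDist_comp_embedding, map_univ_eq_erase_of_range_eq_compl he, filter_erase,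
    erase_eq_of_notMem (by simp [hj])]
  rfl

theorem hammingDist_comp_embedding_of_range_eq_compl_of_ne [DecidableEq β] {j : β}
    (he : Set.range e = {j}ᶜ) (hj : x j ≠ y j) :
    hammingDist (x ∘ e) (y ∘ e) + 1 = hammingDist x y := by
  rw [hammingDist_comp_embedding, map_univ_eq_erase_of_range_eq_compl he, filter_erase,
    card_erase_add_one (by simp [hj])]
  rfl

end Hamming

theorem wt_eq_hammingDist {n : ℕ} (x : Fin n → Bool) : wt x = hammingDist x fun _ => false := by
  simp [wt, hammingDist]

def IsMultiConstWeightCode {m : ℕ} (n w : Fin m → ℕ) (d : ℕ)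
    (C : Finset ((i : Fin m) → Fin (n i) → Bool)) : Prop :=
  (∀ x ∈ C, ∀ i, wt (x i) = w i) ∧ ∀ x ∈ C, ∀ y ∈ C, x ≠ y → d ≤ ∑ i, hammingDist (x i) (y i)

section Code

variable {m : ℕ} {n w : Fin m → ℕ} {d : ℕ} {C : Finset ((i : Fin m) → Fin (n i) → Bool)}

theorem card_le_T (hC : IsMultiConstWeightCode n w d C) : #C ≤ T m n w d :=
  le_csSup ⟨_, by rintro _ ⟨D, rfl, -⟩; exact card_le_univ D⟩ ⟨C, rfl, hC⟩

theorem T_le {b : ℕ} (h : ∀ C, IsMultiConstWeightCode n w d C → #C ≤ b) : T m n w d ≤ b :=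
  csSup_le ⟨0, ∅, rfl, by simp⟩ fun _ ⟨C, hCs, hC⟩ => hCs ▸ h C hC

theorem IsMultiConstWeightCode.sum_card_filter_eq (hC : IsMultiConstWeightCode n w d C)
    (i : Fin m) : ∑ j, #{x ∈ C | x i j = true} = #C * w i := by
  calc ∑ j, #{x ∈ C | x i j = true}
      = ∑ x ∈ C, wt (x i) :=
        (sum_card_bipartiteAbove_eq_sum_card_bipartiteBelow
          fun (x : (k : Fin m) → Fin (n k) → Bool) j => x i j = true).symm
    _ = #C * w i := by rw [sum_congr rfl fun x hx => hC.1 x hx i, sum_const, smul_eq_mul]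

theorem exists_embedding_range_eq_compl {N : ℕ} (j : Fin N) :
    ∃ e : Fin (N - 1) ↪ Fin N, Set.range e = {j}ᶜ := by
  obtain ⟨M, rfl⟩ := Nat.exists_eq_succ_of_ne_zero j.pos.ne'
  exact ⟨Fin.succAboveEmb j, Fin.range_succAbove j⟩

theorem exists_puncturing (n : Fin m → ℕ) (i : Fin m) (j : Fin (n i)) :
    ∃ e : ∀ k, Fin (update n i (n i - 1) k) ↪ Fin (n k),
      Set.range (e i) = {j}ᶜ ∧ ∀ k ≠ i, Set.range (e k) = Set.univ := by
  obtain ⟨ei, hei⟩ : ∃ ei : Fin (update n i (n i - 1) i) ↪ Fin (n i), Set.range ei = {j}ᶜ := by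
    rw [update_self]
    exact exists_embedding_range_eq_compl j
  refine ⟨fun k => if hk : k = i then hk ▸ ei else (finCongr (update_of_ne hk _ _)).toEmbedding,
    by simpa using hei, fun k hk => ?_⟩
  simp [hk]

def puncture {n' : Fin m → ℕ} (e : ∀ k, Fin (n' k) ↪ Fin (n k))
    (x : (k : Fin m) → Fin (n k) → Bool) : (k : Fin m) → Fin (n' k) → Bool :=
  fun k => x k ∘ e k

section Puncture

variable {n' : Fin m → ℕ} {e : ∀ k, Fin (n' k) ↪ Fin (n k)} {i : Fin m} {j : Fin (n i)}
  (hei : Set.range (e i) = {j}ᶜ) (hek : ∀ k ≠ i, Set.range (e k) = Set.univ)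
include hei hek

theorem hammingDist_puncture {x y : (k : Fin m) → Fin (n k) → Bool} (hxy : x i j = y i j)
    (k : Fin m) : hammingDist (puncture e x k) (puncture e y k) = hammingDist (x k) (y k) := by
  by_cases hk : k = i
  · subst hk
    exact hammingDist_comp_embedding_of_range_eq_compl_of_eq _ _ hei hxy
  · exact hammingDist_comp_embedding_of_range_eq_univ _ _ (hek k hk)

theorem wt_puncture {x : (k : Fin m) → Fin (n k) → Bool} (hx : x i j = true)
    (hxw : ∀ k, wt (x k) = w k) (k : Fin m) : wt (puncture e x k) = update w i (w i - 1) k := by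
  by_cases hk : k = i
  · subst hk
    have := hammingDist_comp_embedding_of_range_eq_compl_of_ne (x k) (fun _ => false) hei
      (by simp [hx])
    rw [update_self, ← hxw, wt_eq_hammingDist, wt_eq_hammingDist, ← this]
    rfl
  · rw [update_of_ne hk, ← hxw, wt_eq_hammingDist, wt_eq_hammingDist]
    exact hammingDist_comp_embedding_of_range_eq_univ (x k) (fun _ => false) (hek k hk)

theorem puncture_injOn : Set.InjOn (puncture e) {x | x i j = true} := by
  intro x hx y hy hxy
  funext k
  rw [← hammingDist_eq_zero, ← hammingDist_puncture hei hek (hx.trans hy.symm), hxy,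
    hammingDist_self]

theorem IsMultiConstWeightCode.image_puncture (hC : IsMultiConstWeightCode n w d C) :
    IsMultiConstWeightCode n' (update w i (w i - 1)) d
      ({x ∈ C | x i j = true}.image (puncture e)) := by
  simp only [IsMultiConstWeightCode, forall_mem_image, mem_filter]
  refine ⟨fun x ⟨hxC, hx⟩ => wt_puncture hei hek hx (hC.1 x hxC), ?_⟩
  intro x ⟨hxC, hx⟩ y ⟨hyC, hy⟩ hxy
  simp only [hammingDist_puncture hei hek (hx.trans hy.symm)]
  exact hC.2 x hxC y hyC (ne_of_apply_ne _ hxy)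

end Puncture

theorem IsMultiConstWeightCode.card_filter_le_T (hC : IsMultiConstWeightCode n w d C)
    (i : Fin m) (j : Fin (n i)) :
    #{x ∈ C | x i j = true} ≤ T m (update n i (n i - 1)) (update w i (w i - 1)) d := by
  obtain ⟨e, hei, hek⟩ := exists_puncturing n i j
  have hinj : Set.InjOn (puncture e) ({x ∈ C | x i j = true} : Finset _) :=
    (puncture_injOn hei hek).mono fun x hx => (mem_filter.1 hx).2
  rw [← card_image_of_injOn hinj]
  exact card_le_T (hC.image_puncture hei hek)

end Code

/-- Johnson-type bound:
`T(…; wᵢ, nᵢ; …; d) ≤ ⌊(nᵢ/wᵢ)·T(…; wᵢ-1, nᵢ-1; …; d)⌋` whenever `wᵢ ≥ 1`. -/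
theorem stmt9 (m : ℕ) (n w : Fin m → ℕ) (d : ℕ) (i : Fin m) (hw : 1 ≤ w i) :
    T m n w d ≤
      n i * T m (Function.update n i (n i - 1)) (Function.update w i (w i - 1)) d / w i := by
  refine T_le fun C hC => (Nat.le_div_iff_mul_le hw).2 ?_
  calc #C * w i = ∑ j, #{x ∈ C | x i j = true} := (hC.sum_card_filter_eq i).symm
    _ ≤ ∑ _j : Fin (n i), T m (update n i (n i - 1)) (update w i (w i - 1)) d :=
        sum_le_sum fun j _ => hC.card_filter_le_T i j
    _ = n i * T m (update n i (n i - 1)) (update w i (w i - 1)) d := by simp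
end

section
/- Plotkin-type bound for multiply constant-weight codes: if d = 2u and lambda = w_1 + ... + w_m - u, and w_1^2/n_1 + ... + w_m^2/n_m > lambda, then T(w_1,n_1; ...; w_m,n_m; d) <= floor( u / (w_1^2/n_1 + ... + w_m^2/n_m - lambda) ). -/
open Finset

/-!
Count the distances over all ordered pairs of codewords of a code of size `M`. Each of the
`M(M-1)` pairs of distinct codewords contributes at least `2u`. Column by column, a coordinate
with `k` ones among the codewords contributes `2k(M-k)`. In block `i` the column counts add up
to `M wᵢ`, so Cauchy–Schwarz bounds the block's total by `2M²(wᵢ - wᵢ²/nᵢ)`. Comparing the two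
counts gives `M (∑ wᵢ²/nᵢ - λ) ≤ u`.
-/

lemma card_offDiag_mul_le_sum_sum {α : Type*} [DecidableEq α] (s : Finset α) (D : α → α → ℕ)
    (d : ℕ) (hD : ∀ x ∈ s, ∀ y ∈ s, x ≠ y → d ≤ D x y) :
    #s.offDiag * d ≤ ∑ x ∈ s, ∑ y ∈ s, D x y := by
  rw [← sum_product']
  calc #s.offDiag * d = #s.offDiag • d := smul_eq_mul .. |>.symm
    _ ≤ ∑ p ∈ s.offDiag, D p.1 p.2 := card_nsmul_le_sum _ _ _ fun p hp => by
        obtain ⟨hx, hy, hxy⟩ := mem_offDiag.mp hp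
        exact hD _ hx _ hy hxy
    _ ≤ ∑ p ∈ s ×ˢ s, D p.1 p.2 := sum_le_sum_of_subset fun p hp =>
        have ⟨hx, hy, _⟩ := mem_offDiag.mp hp; mem_product.mpr ⟨hx, hy⟩

lemma sum_sum_ite_ne {α : Type*} (s : Finset α) (p : α → Bool) :
    ∑ x ∈ s, ∑ y ∈ s, (if p x ≠ p y then 1 else 0 : ℚ) =
      2 * #{x ∈ s | p x} * (#s - #{x ∈ s | p x}) := by
  set b : α → ℚ := fun x => if p x then 1 else 0
  have hb : ∀ x y, (if p x ≠ p y then 1 else 0 : ℚ) = b x + b y - 2 * b x * b y := by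
    intro x y
    cases hx : p x <;> cases hy : p y <;> norm_num [b, hx, hy]
  have hsum : ∑ x ∈ s, b x = #{x ∈ s | p x} := by simp [b, sum_boole]
  simp only [hb, sum_sub_distrib, sum_add_distrib, sum_const, nsmul_eq_mul, ← mul_sum, ← sum_mul,
    hsum]
  ring

lemma sum_card_filter_eq_sum_wt {α : Type*} (s : Finset α) {k : ℕ} (f : α → Fin k → Bool) :
    ∑ j, #{x ∈ s | f x j} = ∑ x ∈ s, wt (f x) := by
  simp only [wt, card_filter]
  exact sum_comm

lemma hammingDist_eq_sum {k : ℕ} (a b : Fin k → Bool) :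
    hammingDist a b = ∑ j, if a j ≠ b j then 1 else 0 := by
  rw [hammingDist, card_filter]

lemma sum_sum_hammingDist_le {α : Type*} (s : Finset α) {k : ℕ} (f : α → Fin k → Bool) (w : ℕ)
    (hw : ∀ x ∈ s, wt (f x) = w) :
    ∑ x ∈ s, ∑ y ∈ s, (hammingDist (f x) (f y) : ℚ) ≤ 2 * #s ^ 2 * (w - w ^ 2 / k) := by
  set M : ℚ := (#s : ℚ)
  set K : Fin k → ℚ := fun j => #{x ∈ s | f x j}
  have hK : ∑ j, K j = M * w := by
    have := sum_card_filter_eq_sum_wt s f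
    rw [sum_congr rfl hw, sum_const, smul_eq_mul] at this
    simp only [K, M]
    exact_mod_cast this
  have hCS : (M * w) ^ 2 / k ≤ ∑ j, K j ^ 2 := by
    simpa [hK] using pow_sum_div_card_le_sum_pow (s := univ) (f := K) (fun j _ => by positivity) 1
  calc ∑ x ∈ s, ∑ y ∈ s, (hammingDist (f x) (f y) : ℚ)
      = ∑ j, ∑ x ∈ s, ∑ y ∈ s, (if f x j ≠ f y j then 1 else 0 : ℚ) := by
        simp only [hammingDist_eq_sum, Nat.cast_sum, Nat.cast_ite, Nat.cast_one, Nat.cast_zero]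
        rw [sum_congr rfl fun _ _ => sum_comm]
        exact sum_comm
    _ = 2 * M * ∑ j, K j - 2 * ∑ j, K j ^ 2 := by
        simp only [sum_sum_ite_ne, mul_sum, ← sum_sub_distrib, K, M]
        exact sum_congr rfl fun _ _ => by ring
    _ ≤ 2 * M ^ 2 * (w - w ^ 2 / k) := by
        rw [hK]
        have : (M * w) ^ 2 / k = M ^ 2 * (w ^ 2 / k) := by ring
        nlinarith

lemma card_mul_plotkin_le {ι : Type*} [Fintype ι] {n w : ι → ℕ} (u : ℕ)
    (C : Finset ((i : ι) → Fin (n i) → Bool)) (hw : ∀ x ∈ C, ∀ i, wt (x i) = w i)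
    (hd : ∀ x ∈ C, ∀ y ∈ C, x ≠ y → 2 * u ≤ ∑ i, hammingDist (x i) (y i)) :
    #C * ((∑ i, (w i : ℚ) ^ 2 / n i) - ((∑ i, (w i : ℚ)) - u)) ≤ u := by
  classical
  set M : ℚ := (#C : ℚ)
  set S := ∑ x ∈ C, ∑ y ∈ C, ∑ i, (hammingDist (x i) (y i) : ℚ)
  have hlower : 2 * u * (M ^ 2 - M) ≤ S := by
    have := card_offDiag_mul_le_sum_sum C _ _ hd
    rw [offDiag_card] at this
    have hcast := (Nat.cast_le (α := ℚ)).mpr this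
    push_cast [Nat.cast_sub (Nat.le_mul_self #C)] at hcast
    linarith
  have hupper : S ≤ ∑ i, 2 * M ^ 2 * (w i - (w i : ℚ) ^ 2 / n i) := by
    simp only [S]
    rw [sum_congr rfl fun _ _ => sum_comm, sum_comm]
    exact sum_le_sum fun i _ => sum_sum_hammingDist_le C (· i) (w i) fun x hx => hw x hx i
  rw [← mul_sum, sum_sub_distrib] at hupper
  rcases (show 0 ≤ M by positivity).eq_or_lt with hM | hM
  · rw [← hM, zero_mul]
    exact u.cast_nonneg
  · refine le_of_mul_le_mul_left ?_ hM
    linarith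

theorem stmt11_general (m : ℕ) (n w : Fin m → ℕ) (u : ℕ)
    (hden : (∑ i, (w i : ℚ) ^ 2 / (n i : ℚ)) - ((∑ i, (w i : ℚ)) - (u : ℚ)) > 0) :
    (T m n w (2 * u) : ℤ) ≤
      ⌊(u : ℚ) / ((∑ i, (w i : ℚ) ^ 2 / (n i : ℚ)) - ((∑ i, (w i : ℚ)) - (u : ℚ)))⌋ := by
  rw [← Int.natCast_floor_eq_floor (by positivity), Nat.cast_le]
  refine csSup_le' ?_
  rintro _ ⟨C, rfl, hw, hd⟩
  exact Nat.le_floor ((le_div_iff₀ hden).mpr (card_mul_plotkin_le u C hw hd))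

/-- Plotkin-type bound: with `d = 2u` and `λ = w₁ + ⋯ + w_m - u`, if
`w₁²/n₁ + ⋯ + w_m²/n_m > λ` then `T ≤ ⌊u / (w₁²/n₁ + ⋯ + w_m²/n_m - λ)⌋`. -/
theorem stmt11 (m : ℕ) (n w : Fin m → ℕ) (u : ℕ) (hpos : ∀ i, 0 < n i)
    (hden : (∑ i, (w i : ℚ) ^ 2 / (n i : ℚ)) - ((∑ i, (w i : ℚ)) - (u : ℚ)) > 0) :
    (T m n w (2 * u) : ℤ) ≤
      ⌊(u : ℚ) / ((∑ i, (w i : ℚ) ^ 2 / (n i : ℚ)) - ((∑ i, (w i : ℚ)) - (u : ℚ)))⌋ :=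
  stmt11_general m n w u hden
end

section
/- For equal-parameter multiply constant-weight codes, M(m,n,d,w) <= floor( (n^m / w^m) * M(m, n-1, d, w-1) ) for w >= 1. -/
/-!
Fix one coordinate `j i` in each block. The codewords having a `1` at all these `m` positions,
with those positions deleted, form a code of length `m × (n - 1)`, weight `w - 1` in each block
and the same minimum distance, so there are at most `M(m, n - 1, d, w - 1)` of them. Each
codeword has a `1` at exactly `w ^ m` of the `n ^ m` choices of `j`, so double counting gives
`|C| * w ^ m ≤ n ^ m * M(m, n - 1, d, w - 1)`.
-/

open Finset

theorem Fin.card_filter_univ_succAbove {n : ℕ} (P : Fin (n + 1) → Prop) [DecidablePred P]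
    (p : Fin (n + 1)) : #{k | P k} = (if P p then 1 else 0) + #{k | P (p.succAbove k)} := by
  simp only [card_filter]
  exact Fin.sum_univ_succAbove _ p

lemma wt_eq_wt_comp_succAbove_add_one {n : ℕ} {x : Fin (n + 1) → Bool} {p : Fin (n + 1)}
    (hp : x p = true) : wt x = wt (x ∘ p.succAbove) + 1 := by
  rw [wt, wt, Fin.card_filter_univ_succAbove _ p, if_pos hp, add_comm]
  rfl

lemma hammingDist_comp_succAbove {n : ℕ} {β : Type*} [DecidableEq β] {x y : Fin (n + 1) → β}
    {p : Fin (n + 1)} (hp : x p = y p) :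
    hammingDist (x ∘ p.succAbove) (y ∘ p.succAbove) = hammingDist x y := by
  rw [hammingDist, hammingDist, Fin.card_filter_univ_succAbove _ p, if_neg (not_not.2 hp),
    zero_add]
  rfl

lemma card_filter_forall_eq_true {m n : ℕ} (x : Fin m → Fin n → Bool) :
    #{j : Fin m → Fin n | ∀ i, x i (j i) = true} = ∏ i, wt (x i) := by
  have : ({j | ∀ i, x i (j i) = true} : Finset (Fin m → Fin n)) =
      Fintype.piFinset fun i => {k | x i k = true} := by
    ext j
    simp
  rw [this, Fintype.card_piFinset]
  rfl

namespace MCWC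

variable {m n d w : ℕ}

def IsCode (d w : ℕ) (C : Finset (Fin m → Fin n → Bool)) : Prop :=
  (∀ x ∈ C, ∀ i, wt (x i) = w) ∧
    ∀ x ∈ C, ∀ y ∈ C, x ≠ y → d ≤ ∑ i, hammingDist (x i) (y i)

def codeSizes (m n d w : ℕ) : Set ℕ :=
  {s | ∃ C : Finset (Fin m → Fin n → Bool), #C = s ∧ IsCode d w C}

lemma M_eq_sSup_codeSizes (m n d w : ℕ) : M m n d w = sSup (codeSizes m n d w) := rfl

lemma bddAbove_codeSizes (m n d w : ℕ) : BddAbove (codeSizes m n d w) :=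
  ⟨Fintype.card (Fin m → Fin n → Bool), by
    rintro s ⟨C, rfl, -⟩
    exact C.card_le_univ⟩

lemma card_le_M {C : Finset (Fin m → Fin n → Bool)} (hC : IsCode d w C) : #C ≤ M m n d w :=
  le_csSup (bddAbove_codeSizes m n d w) ⟨C, rfl, hC⟩

lemma exists_isCode_card_eq_M (m n d w : ℕ) :
    ∃ C : Finset (Fin m → Fin n → Bool), IsCode d w C ∧ #C = M m n d w := by
  obtain ⟨C, hcard, hC⟩ :=
    Nat.sSup_mem (s := codeSizes m n d w) ⟨0, ∅, rfl, by simp [IsCode]⟩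
      (bddAbove_codeSizes m n d w)
  exact ⟨C, hC, hcard⟩

lemma M_zero_blocks (n d w w' : ℕ) : M 0 n d w = M 0 n d w' := by
  simp only [M_eq_sSup_codeSizes, codeSizes, IsCode, IsEmpty.forall_iff, implies_true, true_and]

lemma M_eq_zero_of_lt (hm : m ≠ 0) (hw : n < w) : M m n d w = 0 := by
  obtain ⟨C, ⟨hwt, -⟩, hcard⟩ := exists_isCode_card_eq_M m n d w
  rw [← hcard, card_eq_zero, eq_empty_iff_forall_notMem]
  intro x hx
  let i : Fin m := ⟨0, Nat.pos_of_ne_zero hm⟩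
  have hle : wt (x i) ≤ n := (card_le_univ _).trans_eq (Fintype.card_fin n)
  exact hw.not_ge (hwt x hx i ▸ hle)

def shorten (j : Fin m → Fin (n + 1)) (x : Fin m → Fin (n + 1) → Bool) :
    Fin m → Fin n → Bool :=
  fun i => x i ∘ (j i).succAbove

lemma shorten_injOn (j : Fin m → Fin (n + 1)) :
    Set.InjOn (shorten j) {x | ∀ i, x i (j i) = true} := by
  intro x hx y hy hxy
  funext i k
  rcases eq_or_ne k (j i) with rfl | hk
  · rw [hx i, hy i]
  · obtain ⟨k', rfl⟩ := Fin.exists_succAbove_eq hk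
    exact congrFun (congrFun hxy i) k'

lemma isCode_image_shorten {C : Finset (Fin m → Fin (n + 1) → Bool)} (hC : IsCode d w C)
    (j : Fin m → Fin (n + 1)) :
    IsCode d (w - 1) ({x ∈ C | ∀ i, x i (j i) = true}.image (shorten j)) := by
  obtain ⟨hwt, hdist⟩ := hC
  constructor
  · simp only [mem_image, mem_filter]
    rintro _ ⟨x, ⟨hxC, hx⟩, rfl⟩ i
    have hsucc := wt_eq_wt_comp_succAbove_add_one (hx i)
    rw [hwt x hxC i] at hsucc
    exact Nat.eq_sub_of_add_eq hsucc.symm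
  · simp only [mem_image, mem_filter]
    rintro _ ⟨x, ⟨hxC, hx⟩, rfl⟩ _ ⟨y, ⟨hyC, hy⟩, rfl⟩ hne
    calc d ≤ ∑ i, hammingDist (x i) (y i) := hdist x hxC y hyC (ne_of_apply_ne _ hne)
      _ = ∑ i, hammingDist (shorten j x i) (shorten j y i) := by
        refine sum_congr rfl fun i _ => (hammingDist_comp_succAbove ?_).symm
        rw [hx i, hy i]

lemma card_filter_le_M {C : Finset (Fin m → Fin (n + 1) → Bool)} (hC : IsCode d w C)
    (j : Fin m → Fin (n + 1)) : #{x ∈ C | ∀ i, x i (j i) = true} ≤ M m n d (w - 1) := by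
  have hinj : Set.InjOn (shorten j) ({x ∈ C | ∀ i, x i (j i) = true} : Finset _) :=
    (shorten_injOn j).mono fun x hx => (mem_filter.1 hx).2
  rw [← card_image_of_injOn hinj]
  exact card_le_M (isCode_image_shorten hC j)

lemma card_mul_pow_le {C : Finset (Fin m → Fin (n + 1) → Bool)} (hC : IsCode d w C) :
    #C * w ^ m ≤ (n + 1) ^ m * M m n d (w - 1) := by
  calc #C * w ^ m
      = ∑ x ∈ C, ∏ i, wt (x i) := by
        rw [sum_congr rfl fun x hx => prod_congr rfl fun i _ => hC.1 x hx i]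
        simp
    _ = ∑ x ∈ C, #{j : Fin m → Fin (n + 1) | ∀ i, x i (j i) = true} := by
        simp only [card_filter_forall_eq_true]
    _ = ∑ j : Fin m → Fin (n + 1), #{x ∈ C | ∀ i, x i (j i) = true} :=
        (sum_card_bipartiteAbove_eq_sum_card_bipartiteBelow _).symm
    _ ≤ ∑ _j : Fin m → Fin (n + 1), M m n d (w - 1) :=
        sum_le_sum fun j _ => card_filter_le_M hC j
    _ = (n + 1) ^ m * M m n d (w - 1) := by simp

lemma M_mul_pow_le : M m (n + 1) d w * w ^ m ≤ (n + 1) ^ m * M m n d (w - 1) := by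
  obtain ⟨C, hC, hcard⟩ := exists_isCode_card_eq_M m (n + 1) d w
  exact hcard ▸ card_mul_pow_le hC

end MCWC

open MCWC in
/-- Recursive Johnson bound for MCWCs:
`M(m,n,d,w) ≤ ⌊(nᵐ/wᵐ)·M(m,n-1,d,w-1)⌋` for `w ≥ 1`. -/
theorem stmt12 (m n d w : ℕ) (hw : 1 ≤ w) :
    M m n d w ≤ n ^ m * M m (n - 1) d (w - 1) / w ^ m := by
  rcases n with _ | n
  · rcases m with _ | m
    · simp [M_zero_blocks 0 d w (w - 1)]
    · simp [M_eq_zero_of_lt m.succ_ne_zero hw]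
  · rw [Nat.le_div_iff_mul_le (pow_pos hw m)]
    exact M_mul_pow_le
end

section
/- Singleton-like bound: if m*w - d/2 + 1 <= m (with d even), then M(m,n,d,w) <= (n/w)^{mw - d/2 + 1}. -/
/-!
Fix any `s` blocks. For a codeword `x`, the tuples choosing one `1`-position of `x` in each of
these blocks number `w ^ s`, and two distinct codewords never share such a tuple: on each block
where they share a `1` their distance is at most `2w - 2`, so a common tuple would give total
distance at most `2wm - 2s < d`. Hence `|C| * w ^ s ≤ n ^ s`; with `s = mw - d/2 + 1` this is the
bound.
-/

open Finset

def ones {n : ℕ} (x : Fin n → Bool) : Finset (Fin n) := univ.filter fun i => x i = true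

lemma card_ones {n : ℕ} (x : Fin n → Bool) : #(ones x) = wt x := rfl

lemma hammingDist_add_two_mul_card_ones_inter {n : ℕ} (u v : Fin n → Bool) :
    hammingDist u v + 2 * #(ones u ∩ ones v) = wt u + wt v := by
  have hdist : hammingDist u v = #(ones u \ ones v) + #(ones v \ ones u) := by
    rw [hammingDist, ← card_union_of_disjoint disjoint_sdiff_sdiff]
    congr 1
    ext p
    cases hup : u p <;> cases hvp : v p <;> simp [ones, hup, hvp]
  have hu := card_sdiff_add_card_inter (ones u) (ones v)
  have hv := card_sdiff_add_card_inter (ones v) (ones u)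
  rw [inter_comm] at hv
  rw [← card_ones, ← card_ones]
  omega

section Blocks

variable {ι : Type*} [Fintype ι] [DecidableEq ι] {n w : ℕ}

lemma sum_hammingDist_add_two_mul_card_le {x y : ι → Fin n → Bool}
    (hx : ∀ i, wt (x i) = w) (hy : ∀ i, wt (y i) = w) {S : Finset ι}
    (hS : ∀ i ∈ S, (ones (x i) ∩ ones (y i)).Nonempty) :
    ∑ i, hammingDist (x i) (y i) + 2 * #S ≤ 2 * w * Fintype.card ι := by
  have hblock : ∀ i, hammingDist (x i) (y i) + 2 * (if i ∈ S then 1 else 0) ≤ 2 * w := by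
    intro i
    have := hammingDist_add_two_mul_card_ones_inter (x i) (y i)
    rw [hx i, hy i] at this
    split_ifs with hi
    · have := (hS i hi).card_pos
      omega
    · omega
  calc ∑ i, hammingDist (x i) (y i) + 2 * #S
      = ∑ i, (hammingDist (x i) (y i) + 2 * (if i ∈ S then 1 else 0)) := by
        rw [sum_add_distrib, ← mul_sum, sum_boole, filter_mem_eq_inter, univ_inter,
          Nat.cast_id]
    _ ≤ ∑ _i : ι, 2 * w := sum_le_sum fun i _ => hblock i
    _ = 2 * w * Fintype.card ι := by rw [sum_const, card_univ, smul_eq_mul, mul_comm]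

lemma card_mul_pow_card_le {d : ℕ} (C : Finset (ι → Fin n → Bool))
    (hweight : ∀ x ∈ C, ∀ i, wt (x i) = w)
    (hdist : ∀ x ∈ C, ∀ y ∈ C, x ≠ y → d ≤ ∑ i, hammingDist (x i) (y i))
    (S : Finset ι) (hS : 2 * w * Fintype.card ι < d + 2 * #S) :
    #C * w ^ #S ≤ n ^ #S := by
  let J : (ι → Fin n → Bool) → Finset (S → Fin n) :=
    fun x => Fintype.piFinset fun i => ones (x i)
  have hJcard : ∀ x ∈ C, #(J x) = w ^ #S := fun x hx => by
    simp only [J, Fintype.card_piFinset, card_ones, hweight x hx, prod_const, card_univ,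
      Fintype.card_coe]
  have hJdisj : (C : Set (ι → Fin n → Bool)).PairwiseDisjoint J := by
    intro x hx y hy hxy
    refine disjoint_left.mpr fun j hjx hjy => ?_
    rw [Fintype.mem_piFinset] at hjx hjy
    have := sum_hammingDist_add_two_mul_card_le (hweight x hx) (hweight y hy)
      (S := S) fun i hi => ⟨j ⟨i, hi⟩, mem_inter.mpr ⟨hjx ⟨i, hi⟩, hjy ⟨i, hi⟩⟩⟩
    have := hdist x hx y hy hxy
    omega
  calc #C * w ^ #S = #(C.biUnion J) := by
        rw [card_biUnion hJdisj, sum_congr rfl hJcard, sum_const, smul_eq_mul]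
    _ ≤ n ^ #S := by
        simpa only [Fintype.card_fun, Fintype.card_coe, Fintype.card_fin] using
          card_le_univ (C.biUnion J)

end Blocks

lemma M_le {m n d w b : ℕ}
    (h : ∀ C : Finset (Fin m → Fin n → Bool), (∀ x ∈ C, ∀ i, wt (x i) = w) →
      (∀ x ∈ C, ∀ y ∈ C, x ≠ y → d ≤ ∑ i, hammingDist (x i) (y i)) → #C ≤ b) :
    M m n d w ≤ b :=
  csSup_le ⟨0, ∅, by simp⟩ fun _ ⟨C, hC, hweight, hdist⟩ => hC ▸ h C hweight hdist

theorem stmt13_general (m n d w : ℕ) (hw : 1 ≤ w)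
    (hs : m * w - d / 2 + 1 ≤ m) :
    (M m n d w : ℚ) ≤ ((n : ℚ) / (w : ℚ)) ^ (m * w - d / 2 + 1) := by
  set s := m * w - d / 2 + 1
  obtain ⟨S, -, hScard⟩ := exists_subset_card_eq (s := (univ : Finset (Fin m))) (n := s)
    (by rwa [card_univ, Fintype.card_fin])
  have hMle : M m n d w ≤ n ^ s / w ^ s := M_le fun C hweight hdist => by
    rw [Nat.le_div_iff_mul_le (by positivity), ← hScard]
    refine card_mul_pow_card_le C hweight hdist S ?_
    rw [Fintype.card_fin, hScard, mul_assoc, mul_comm w m]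
    omega
  calc (M m n d w : ℚ) ≤ ((n ^ s / w ^ s : ℕ) : ℚ) := by exact_mod_cast hMle
    _ ≤ (n : ℚ) ^ s / (w : ℚ) ^ s := by exact_mod_cast Nat.cast_div_le
    _ = ((n : ℚ) / w) ^ s := (div_pow _ _ _).symm

/-- Singleton-like bound: if `d` is even and `mw - d/2 + 1 ≤ m`, then
`M(m,n,d,w) ≤ (n/w)^{mw - d/2 + 1}`. -/
theorem stmt13 (m n d w : ℕ) (hw : 1 ≤ w) (hd : Even d)
    (hs : m * w - d / 2 + 1 ≤ m) :
    (M m n d w : ℚ) ≤ ((n : ℚ) / (w : ℚ)) ^ (m * w - d / 2 + 1) :=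
  stmt13_general m n d w hw hs
end

section
/- Graph homomorphism independence bound: if G and H are finite graphs, H is vertex-transitive, and there exists a graph homomorphism from G to H, then alpha(H) <= (|V(H)| / |V(G)|) * alpha(G), where alpha denotes the independence number. -/
/-!
Let `f : G →g H` and let `A` be the automorphism group of `H`; fix a maximum independent set `S`
of `H`. For every `φ ∈ A` the preimage of `S` under `φ ∘ f` is independent in `G`, so it has at most
`α(G)` vertices. By transitivity, for each vertex `v` of `G` exactly `|S| |A| / |W|` automorphisms
send `f v` into `S`, so summing the preimage sizes over `A` gives `|V| |S| |A| / |W| ≤ |A| α(G)`.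
-/

/-- Independence number of a finite simple graph. -/
noncomputable def indepNum {V : Type*} [Fintype V] (G : SimpleGraph V) : ℕ :=
  sSup {k | ∃ s : Finset V, s.card = k ∧ ∀ x ∈ s, ∀ y ∈ s, ¬ G.Adj x y}

open Finset

theorem indepNum_eq_simpleGraph_indepNum {V : Type*} [Fintype V] (G : SimpleGraph V) :
    indepNum G = G.indepNum := by
  unfold indepNum SimpleGraph.indepNum
  congr 1
  ext k
  refine exists_congr fun s => ?_
  rw [SimpleGraph.isNIndepSet_iff, SimpleGraph.isIndepSet_iff, and_comm]
  exact and_congr_left' ⟨fun h x hx y hy _ => h x hx y hy,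
    fun h x hx y hy hadj => h hx hy (G.ne_of_adj hadj) hadj⟩

section TransitiveCounting

variable {Γ X : Type*} [Group Γ] [MulAction Γ X] [MulAction.IsPretransitive Γ X]
  [Fintype Γ] [DecidableEq X]

theorem card_filter_smul_eq_eq (x y z : X) :
    #{g : Γ | g • x = y} = #{g : Γ | g • x = z} := by
  obtain ⟨k, rfl⟩ := MulAction.exists_smul_eq Γ y z
  refine card_bij' (fun g _ => k * g) (fun g _ => k⁻¹ * g) ?_ ?_ ?_ ?_ <;>
    simp +contextual [mul_smul]

variable [Fintype X]

theorem card_filter_smul_eq_mul_card (x y : X) :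
    #{g : Γ | g • x = y} * Fintype.card X = Fintype.card Γ :=
  calc #{g : Γ | g • x = y} * Fintype.card X
      = ∑ z : X, #{g : Γ | g • x = z} := by
        simp [sum_congr rfl fun z _ => card_filter_smul_eq_eq (Γ := Γ) x z y, mul_comm]
    _ = Fintype.card Γ := (card_eq_sum_card_fiberwise fun _ _ => mem_univ _).symm

theorem card_filter_smul_mem_mul_card (x : X) (S : Finset X) :
    #{g : Γ | g • x ∈ S} * Fintype.card X = #S * Fintype.card Γ :=
  calc #{g : Γ | g • x ∈ S} * Fintype.card X
      = ∑ y ∈ S, #{g : Γ | g • x = y} * Fintype.card X := by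
        rw [card_eq_sum_card_fiberwise (s := {g : Γ | g • x ∈ S}) (t := S) (f := (· • x))
          fun g hg => (mem_filter.1 hg).2, sum_mul]
        refine sum_congr rfl fun y hy => ?_
        rw [filter_filter]
        congr 3 with g
        exact and_iff_right_of_imp fun h => h ▸ hy
    _ = #S * Fintype.card Γ := by simp [card_filter_smul_eq_mul_card]

theorem sum_card_filter_smul_mem_mul_card {V : Type*} [Fintype V] (f : V → X) (S : Finset X) :
    (∑ g : Γ, #{v : V | g • f v ∈ S}) * Fintype.card X = Fintype.card V * #S * Fintype.card Γ := by
  simp only [card_filter]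
  rw [sum_comm, sum_mul]
  simp only [← card_filter, card_filter_smul_mem_mul_card, sum_const, card_univ, smul_eq_mul]
  ring

end TransitiveCounting

namespace SimpleGraph

variable {V W : Type*} {G : SimpleGraph V} {H : SimpleGraph W}

theorem IsIndepSet.preimage {s : Set W} (hs : H.IsIndepSet s) (f : G →g H) :
    G.IsIndepSet (f ⁻¹' s) := fun _ hx _ hy _ hadj =>
  hs hx hy (H.ne_of_adj (f.map_adj hadj)) (f.map_adj hadj)

theorem indepNum_mul_card_le_of_hom [Fintype V] [Fintype W]
    [MulAction.IsPretransitive (H ≃g H) W] (f : G →g H) :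
    H.indepNum * Fintype.card V ≤ Fintype.card W * G.indepNum := by
  classical
  let _ : Fintype (H ≃g H) := Fintype.ofInjective _ DFunLike.coe_injective
  obtain ⟨S, hS⟩ := H.exists_isNIndepSet_indepNum
  have hpreimage (φ : H ≃g H) : #{v : V | φ • f v ∈ S} ≤ G.indepNum := by
    apply IsIndepSet.card_le_indepNum
    convert hS.isIndepSet.preimage ((φ : H →g H).comp f) using 1
    ext v
    simp
  have hsum := sum_le_card_nsmul univ _ _ fun φ _ => hpreimage φ
  have hcount := sum_card_filter_smul_mem_mul_card (Γ := H ≃g H) f S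
  rw [hS.card_eq] at hcount
  rw [card_univ, smul_eq_mul] at hsum
  refine Nat.le_of_mul_le_mul_right ?_ (Fintype.card_pos (α := H ≃g H))
  calc H.indepNum * Fintype.card V * Fintype.card (H ≃g H)
      = (∑ φ : H ≃g H, #{v : V | φ • f v ∈ S}) * Fintype.card W := by rw [hcount]; ring
    _ ≤ Fintype.card (H ≃g H) * G.indepNum * Fintype.card W := Nat.mul_le_mul_right _ hsum
    _ = Fintype.card W * G.indepNum * Fintype.card (H ≃g H) := by ring

end SimpleGraph

/-- If `H` is vertex-transitive and there is a graph homomorphism `G → H`, then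
`α(H) ≤ (|V(H)|/|V(G)|)·α(G)`. -/
theorem stmt16 {V W : Type*} [Fintype V] [Fintype W] (G : SimpleGraph V) (H : SimpleGraph W)
    (htrans : ∀ u v : W, ∃ φ : H ≃g H, φ u = v)
    (hhom : Nonempty (G →g H)) :
    indepNum H * Fintype.card V ≤ Fintype.card W * indepNum G := by
  obtain ⟨f⟩ := hhom
  have : MulAction.IsPretransitive (H ≃g H) W := ⟨htrans⟩
  rw [indepNum_eq_simpleGraph_indepNum, indepNum_eq_simpleGraph_indepNum]
  exact SimpleGraph.indepNum_mul_card_le_of_hom f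
end
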